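/- arXiv:1209.4627 — 7 statements merged into one kernel-verified Lean document; each statement's English description precedes it below -/
import Mathlib

section
/- Let n ≥ c ≥ 2 be integers and let r be an integer with r > ⌈c/2⌉ + log₂⌈(n-c+1)/2⌉. Then ⌊n/2⌋ < Σ_{i=0}^{r-1} ⌈2^{-i-1}·⌈(n-c+1)/2⌉⌉. -/
/-!
Write `m = ⌈(n-c+1)/2⌉` and `k = ⌈c/2⌉`, so that `⌊n/2⌋ < m + k` and the hypothesis on `r` says
`m < 2 ^ u` with `u = r - k`. The first `u` summands dominate the geometric sum
`∑_{i<u} m / 2^(i+1) = m - m / 2^u > m - 1`, hence add up to at least `m`, and each of the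
remaining `k` summands is a positive integer.
-/

open Finset

lemma sum_range_div_two_pow_succ (x : ℚ) (u : ℕ) :
    ∑ i ∈ range u, x / 2 ^ (i + 1) = x - x / 2 ^ u := by
  induction u with
  | zero => simp
  | succ u ih =>
    rw [sum_range_succ, ih]
    field_simp
    ring

lemma le_sum_ceil_div_two_pow_succ {m : ℤ} {u : ℕ} (h : m < 2 ^ u) :
    m ≤ ∑ i ∈ range u, ⌈(m : ℚ) / 2 ^ (i + 1)⌉ := by
  have hfrac : (m : ℚ) / 2 ^ u < 1 := by
    rw [div_lt_one (by positivity)]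
    exact_mod_cast h
  have hsum : (m : ℚ) - m / 2 ^ u ≤ ∑ i ∈ range u, (⌈(m : ℚ) / 2 ^ (i + 1)⌉ : ℚ) := by
    rw [← sum_range_div_two_pow_succ]
    gcongr with i
    exact Int.le_ceil _
  have : (m : ℚ) - 1 < ((∑ i ∈ range u, ⌈(m : ℚ) / 2 ^ (i + 1)⌉ : ℤ) : ℚ) := by
    push_cast
    linarith
  have : m - 1 < ∑ i ∈ range u, ⌈(m : ℚ) / 2 ^ (i + 1)⌉ := by exact_mod_cast this
  omega

lemma add_le_sum_ceil_div_two_pow_succ {m : ℤ} (hm : 0 < m) {u : ℕ} (h : m < 2 ^ u) (k : ℕ) :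
    m + k ≤ ∑ i ∈ range (u + k), ⌈(m : ℚ) / 2 ^ (i + 1)⌉ := by
  rw [sum_range_add]
  gcongr
  · exact le_sum_ceil_div_two_pow_succ h
  · calc (k : ℤ) = ∑ _i ∈ range k, 1 := by simp
      _ ≤ _ := sum_le_sum fun i _ => Int.one_le_ceil_iff.mpr (by positivity)

lemma lt_two_pow_of_logb_lt {m : ℤ} (hm : 0 < m) {u : ℕ} (h : Real.logb 2 m < u) :
    m < 2 ^ u := by
  have := (Real.logb_lt_iff_lt_rpow one_lt_two (by exact_mod_cast hm)).mp h
  rw [Real.rpow_natCast] at this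
  exact_mod_cast this

/-- Key arithmetic lemma (Lemma 1.6): if `n ≥ c ≥ 2` and
`r > ⌈c/2⌉ + log₂⌈(n-c+1)/2⌉`, then
`⌊n/2⌋ < ∑_{i=0}^{r-1} ⌈2^{-i-1}·⌈(n-c+1)/2⌉⌉`. -/
theorem stmt_0 (n c : ℤ) (r : ℕ) (hc : 2 ≤ c) (hn : c ≤ n)
    (hr : (r : ℝ) > (⌈(c : ℚ) / 2⌉ : ℝ) +
      Real.logb 2 ((⌈((n - c + 1 : ℤ) : ℚ) / 2⌉ : ℤ) : ℝ)) :
    ⌊(n : ℚ) / 2⌋ <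
      ∑ i ∈ Finset.range r, ⌈((⌈((n - c + 1 : ℤ) : ℚ) / 2⌉ : ℤ) : ℚ) / 2 ^ (i + 1)⌉ := by
  set m : ℤ := ⌈((n - c + 1 : ℤ) : ℚ) / 2⌉
  set k : ℤ := ⌈(c : ℚ) / 2⌉
  have hm : m = -(-(n - c + 1) / 2) := by
    simpa only [Nat.cast_ofNat] using Rat.ceil_intCast_div_natCast (n - c + 1) 2
  have hk : k = -(-c / 2) := by simpa only [Nat.cast_ofNat] using Rat.ceil_intCast_div_natCast c 2
  have hfloor : ⌊(n : ℚ) / 2⌋ = n / 2 := by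
    simpa only [Nat.cast_ofNat] using Rat.floor_intCast_div_natCast n 2
  have hm_pos : 0 < m := by omega
  have hlog_nonneg : 0 ≤ Real.logb 2 m := Real.logb_nonneg one_lt_two (by exact_mod_cast hm_pos)
  have hkr : k < r := by exact_mod_cast (by linarith : (k : ℝ) < r)
  obtain ⟨u, rfl⟩ : ∃ u, r = u + k.toNat := ⟨r - k.toNat, by omega⟩
  have hu : Real.logb 2 m < u := by
    have hk_toNat : ((k.toNat : ℤ) : ℝ) = k := by rw [Int.toNat_of_nonneg (by omega)]
    push_cast at hr hk_toNat
    linarith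
  calc ⌊(n : ℚ) / 2⌋ < m + (k.toNat : ℤ) := by omega
    _ ≤ _ := add_le_sum_ceil_div_two_pow_succ hm_pos (lt_two_pow_of_logb_lt hm_pos hu) _
end

section
/- (Griesmer bound over F₂) If ι : F₂^r → F₂^m is an injective linear map such that every nonzero element of the image has Hamming weight at least w, then m ≥ Σ_{i=0}^{r-1} ⌈w/2^i⌉. -/
open Finset

private lemma zmod2_add_ne' : ∀ (a b : ZMod 2),
    a + b ≠ 0 ↔ ((a ≠ 0 ∧ b = 0) ∨ (a = 0 ∧ b ≠ 0)) := by decide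

private lemma zmod2_add_ne (a b : ZMod 2) :
    a + b ≠ 0 ↔ ((a ≠ 0 ∧ b = 0) ∨ (a = 0 ∧ b ≠ 0)) := zmod2_add_ne' a b

private lemma zmod2_eq_of_iff : ∀ (a b : ZMod 2), (a ≠ 0 ↔ b ≠ 0) → a = b := by decide

private theorem griesmer_aux (r : ℕ) : ∀ (V : Type) [AddCommGroup V] [Module (ZMod 2) V]
    [FiniteDimensional (ZMod 2) V],
    Module.finrank (ZMod 2) V = r → ∀ (M : Type) [Fintype M] (w : ℕ)
    (ι : V →ₗ[ZMod 2] (M → ZMod 2)), Function.Injective ι →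
    (∀ v : V, v ≠ 0 → w ≤ hammingNorm (ι v)) →
    (Fintype.card M : ℤ) ≥ ∑ i ∈ Finset.range r, ⌈(w : ℚ) / 2 ^ i⌉ := by
  induction r with
  | zero => intro V _ _ _ _ M _ w ι _ _; simp
  | succ k IH =>
    intro V _ _ _ hr M _ w ι hinj hw
    classical
    have hVnt : Nontrivial V := by
      apply Module.nontrivial_of_finrank_pos (R := ZMod 2); omega
    obtain ⟨v1, hv1⟩ := exists_ne (0 : V)
    set Wt : Set ℕ := {n | ∃ v : V, v ≠ 0 ∧ hammingNorm (ι v) = n} with hWt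
    have hne : Wt.Nonempty := ⟨_, v1, hv1, rfl⟩
    obtain ⟨v₀, hv₀ne, hv₀d⟩ := Nat.sInf_mem hne
    set d := sInf Wt with hd
    have hmin : ∀ v : V, v ≠ 0 → d ≤ hammingNorm (ι v) :=
      fun v hv => Nat.sInf_le ⟨v, hv, rfl⟩
    have hwd : w ≤ d := hv₀d ▸ hw v₀ hv₀ne
    set c := ι v₀ with hc
    set C : Finset M := {i | c i ≠ 0} with hC
    have hCcard : C.card = d := hv₀d
    -- the residual ambient type
    set S := {i : M // c i = 0} with hS
    set ρ : V →ₗ[ZMod 2] (S → ZMod 2) :=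
      (LinearMap.funLeft (ZMod 2) (ZMod 2) (fun j : S => (j : M))).comp ι with hρ
    have hρapp : ∀ (x : V) (j : S), ρ x j = ι x (j : M) := fun x j => rfl
    -- weight of residual words
    have hρcard : ∀ x : V, hammingNorm (ρ x) = (({i | ι x i ≠ 0} : Finset M) \ C).card := by
      intro x
      rw [hammingNorm]
      apply Finset.card_bij (fun (j : S) _ => (j : M))
      · intro j hj
        simp only [mem_filter, mem_univ, true_and] at hj
        simp only [mem_sdiff, hC, mem_filter, mem_univ, true_and]
        exact ⟨by simpa [hρapp] using hj, by simpa using j.2⟩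
      · intro a _ b _ hab; exact Subtype.ext hab
      · intro i hi
        simp only [mem_sdiff, hC, mem_filter, mem_univ, true_and, not_not] at hi
        exact ⟨⟨i, hi.2⟩, by simpa [mem_filter, hρapp] using hi.1, rfl⟩
    have hv₀mem : v₀ ∈ LinearMap.ker ρ := by
      rw [LinearMap.mem_ker]; funext j; simpa [hρapp] using j.2
    -- kernel of ρ
    have hker : LinearMap.ker ρ = Submodule.span (ZMod 2) {v₀} := by
      apply le_antisymm
      · intro x hx
        by_cases hx0 : x = 0
        · simp [hx0]
        have hsub : ({i | ι x i ≠ 0} : Finset M) ⊆ C := by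
          intro i hi
          simp only [mem_filter, mem_univ, true_and] at hi
          simp only [hC, mem_filter, mem_univ, true_and]
          intro hci
          have := congrFun (LinearMap.mem_ker.mp hx) ⟨i, hci⟩
          exact hi (by simpa [hρapp] using this)
        have hle : C.card ≤ ({i | ι x i ≠ 0} : Finset M).card := by
          rw [hCcard]; exact hmin x hx0
        have hseq : ({i | ι x i ≠ 0} : Finset M) = C :=
          Finset.eq_of_subset_of_card_le hsub hle
        have hιx : ι x = c := by
          funext i
          apply zmod2_eq_of_iff
          constructor
          · intro h
            have hm : i ∈ ({i | ι x i ≠ 0} : Finset M) := by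
              simpa [mem_filter] using h
            rw [hseq] at hm; simpa [hC, mem_filter] using hm
          · intro h
            have hm : i ∈ C := by simp [hC, mem_filter, h]
            rw [← hseq] at hm; simpa [mem_filter] using hm
        have hxv : x = v₀ := hinj hιx
        rw [hxv]; exact Submodule.mem_span_singleton_self v₀
      · rw [Submodule.span_le, Set.singleton_subset_iff]; exact hv₀mem
    set K := LinearMap.ker ρ with hK
    set ι' : (V ⧸ K) →ₗ[ZMod 2] (S → ZMod 2) := K.liftQ ρ le_rfl with hι'
    have hinj' : Function.Injective ι' := by
      rw [← LinearMap.ker_eq_bot]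
      exact Submodule.ker_liftQ_eq_bot _ _ _ le_rfl
    have hfr : Module.finrank (ZMod 2) (V ⧸ K) = k := by
      have h1 : Module.finrank (ZMod 2) K = 1 := by
        rw [hker]; exact finrank_span_singleton hv₀ne
      have h2 := Submodule.finrank_quotient_add_finrank K
      omega
    -- char two fact
    have hvv : v₀ + v₀ = 0 := by
      rw [← two_smul (ZMod 2), show (2 : ZMod 2) = 0 by decide, zero_smul]
    set w' := (d + 1) / 2 with hw'def
    have hw2 : ∀ v : V ⧸ K, v ≠ 0 → w' ≤ hammingNorm (ι' v) := by
      intro v hv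
      obtain ⟨x, rfl⟩ := Submodule.mkQ_surjective K v
      have hxK : x ∉ K := fun h => hv (by simpa [Submodule.Quotient.mk_eq_zero] using h)
      have hx0 : x ≠ 0 := fun h => hxK (h ▸ (LinearMap.ker ρ).zero_mem)
      have hxv0 : x + v₀ ≠ 0 := by
        intro h
        have hx : x = v₀ := by
          have := congrArg (· + v₀) h
          simpa [add_assoc, hvv] using this
        exact hxK (hx ▸ hv₀mem)
      have hι'x : ι' (Submodule.mkQ K x) = ρ x := by
        simp [hι', Submodule.liftQ_apply]
      rw [hι'x, hρcard x]
      set A : Finset M := {i | ι x i ≠ 0} with hA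
      have hAd : d ≤ A.card := hmin x hx0
      have hACd : d ≤ (A \ C).card + (C \ A).card := by
        have hsplit : ({i | ι (x + v₀) i ≠ 0} : Finset M) = (A \ C) ∪ (C \ A) := by
          ext i
          simp only [mem_filter, mem_univ, true_and, mem_union, mem_sdiff, hA, hC,
            map_add, Pi.add_apply, not_not]
          exact (zmod2_add_ne (ι x i) (c i)).trans (by tauto)
        have hmm := hmin (x + v₀) hxv0
        rw [hammingNorm, hsplit, Finset.card_union_of_disjoint (disjoint_sdiff_sdiff)] at hmm
        exact hmm
      have e1 : (A \ C).card + (A ∩ C).card = A.card := Finset.card_sdiff_add_card_inter A C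
      have e2 : (C \ A).card + (C ∩ A).card = C.card := Finset.card_sdiff_add_card_inter C A
      have e3 : (A ∩ C).card = (C ∩ A).card := by rw [inter_comm]
      omega
    have hIH := IH (V ⧸ K) hfr S w' ι' hinj' hw2
    -- cardinality split
    have hcardM : Fintype.card M = d + Fintype.card S := by
      have h1 : Fintype.card S = ({i : M | c i = 0} : Finset M).card := Fintype.card_subtype _
      have h2 : C.card + (univ.filter (fun i : M => ¬ c i ≠ 0)).card = Fintype.card M :=
        Finset.card_filter_add_card_filter_not _
      have h3 : ({i : M | c i = 0} : Finset M) = univ.filter (fun i : M => ¬ c i ≠ 0) := by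
        ext i; simp
      rw [h1, h3]; omega
    -- final arithmetic
    rw [ge_iff_le, Finset.sum_range_succ']
    have h0 : ⌈(w : ℚ) / 2 ^ 0⌉ = (w : ℤ) := by simp
    have hterm : ∑ i ∈ Finset.range k, ⌈(w : ℚ) / 2 ^ (i + 1)⌉ ≤
        ∑ i ∈ Finset.range k, ⌈(w' : ℚ) / 2 ^ i⌉ := by
      apply Finset.sum_le_sum
      intro i _
      apply Int.ceil_le_ceil
      have hww' : (w : ℚ) ≤ 2 * w' := by
        have : w ≤ 2 * w' := by omega
        exact_mod_cast this
      rw [pow_succ, div_le_div_iff₀ (by positivity) (by positivity)]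
      nlinarith [pow_pos (show (0:ℚ) < 2 by norm_num) i]
    rw [h0]
    have hS' : (∑ i ∈ Finset.range k, ⌈(w' : ℚ) / 2 ^ i⌉) ≤ (Fintype.card S : ℤ) := hIH
    have : (Fintype.card M : ℤ) = d + Fintype.card S := by exact_mod_cast hcardM
    push_cast at this ⊢
    linarith [hterm, hS', (by exact_mod_cast hwd : (w:ℤ) ≤ (d:ℤ))]

/-- The Griesmer bound over `F₂`: if `ι : F₂^r → F₂^m` is an injective linear
map such that every nonzero element of its image has Hamming weight at least
`w`, then `m ≥ ∑_{i=0}^{r-1} ⌈w/2^i⌉`. -/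
theorem stmt_2 (r m w : ℕ)
    (ι : (Fin r → ZMod 2) →ₗ[ZMod 2] (Fin m → ZMod 2))
    (hinj : Function.Injective ι)
    (hw : ∀ v : Fin r → ZMod 2, v ≠ 0 → w ≤ hammingNorm (ι v)) :
    (m : ℤ) ≥ ∑ i ∈ Finset.range r, ⌈(w : ℚ) / 2 ^ i⌉ := by
  have := griesmer_aux r (Fin r → ZMod 2) (Module.finrank_fin_fun (ZMod 2)) (Fin m) w ι hinj hw
  simpa using this
end

section
/- Let n ≥ c ≥ 2 be integers, m = ⌊n/2⌋, and let ι : F₂^s → F₂^m be an injective linear map with s ≥ 2 and s > log₂⌈(n-c+1)/2⌉ + ⌈c/2⌉ + 2. Then there exists a nonzero σ ∈ F₂^s such that ι(σ) has even Hamming weight and 2·wt(ι(σ)) ≤ (n-c)/2. -/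
private lemma zmod2_add_aux : ∀ x y : ZMod 2, x ≠ 0 → y ≠ 0 → x + y = 0 := by decide

private lemma zmod2_ite_aux : ∀ x : ZMod 2, (if x ≠ 0 then (1:ZMod 2) else 0) = x := by decide

/-- First part of the Griesmer proposition: for `n ≥ c ≥ 2`, `m = ⌊n/2⌋`, and an
injective linear map `ι : F₂^s → F₂^m` with `s ≥ 2` and
`s > log₂⌈(n-c+1)/2⌉ + ⌈c/2⌉ + 2`, there is a nonzero `σ` whose image has even
Hamming weight `wt(ι σ)` with `4·wt(ι σ) ≤ n - c`. -/
theorem stmt_4 (n c s : ℕ) (hc : 2 ≤ c) (hcn : c ≤ n)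
    (ι : (Fin s → ZMod 2) →ₗ[ZMod 2] (Fin (n / 2) → ZMod 2))
    (hinj : Function.Injective ι) (hs2 : 2 ≤ s)
    (hs : (s : ℝ) > Real.logb 2 ((⌈((n : ℚ) - c + 1) / 2⌉ : ℤ) : ℝ) +
      (⌈(c : ℚ) / 2⌉ : ℝ) + 2) :
    ∃ σ : Fin s → ZMod 2, σ ≠ 0 ∧ Even (hammingNorm (ι σ)) ∧
      4 * hammingNorm (ι σ) ≤ n - c := by
  haveI : Fact (Nat.Prime 2) := ⟨Nat.prime_two⟩
  set t := (c+1)/2 with ht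
  set D := n - c with hD
  -- s ≤ n / 2
  have hsm : s ≤ n / 2 := by
    have h := LinearMap.finrank_le_finrank_of_injective hinj
    simpa [Module.finrank_fintype_fun_eq_card] using h
  -- ceiling of c/2
  have hceilc : (⌈(c:ℚ)/2⌉ : ℤ) = (t : ℤ) := by
    rw [Int.ceil_eq_iff]
    rcases Nat.even_or_odd c with ⟨a, ha⟩ | ⟨a, ha⟩
    · have h1 : t = a := by omega
      rw [h1, ha]; push_cast; constructor <;> linarith
    · have h1 : t = a+1 := by omega
      rw [h1, ha]; push_cast; constructor <;> linarith
  set X : ℤ := ⌈((n:ℚ) - c + 1)/2⌉ with hX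
  have h2X : (D : ℤ) + 1 ≤ 2 * X := by
    have h := Int.le_ceil (((n:ℚ) - c + 1)/2)
    have h3 : ((D : ℚ)) + 1 ≤ 2 * (X : ℚ) := by
      rw [hD, Nat.cast_sub hcn]; rw [hX]; linarith
    exact_mod_cast h3
  have hX1 : 1 ≤ X := by omega
  have hlogb0 : 0 ≤ Real.logb 2 (X : ℝ) :=
    Real.logb_nonneg one_lt_two (by exact_mod_cast hX1)
  rw [hceilc] at hs
  have hst : t + 3 ≤ s := by
    have h : (t : ℝ) + 2 < s := by push_cast at hs ⊢; linarith
    have : t + 2 < s := by exact_mod_cast h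
    omega
  -- X < 2^(s-t-2)
  have hXlt : X < (2:ℤ) ^ (s - t - 2) := by
    have hk : ((s - t - 2 : ℕ) : ℝ) = (s : ℝ) - t - 2 := by
      have h2 : s - t - 2 = s - (t+2) := by omega
      rw [h2, Nat.cast_sub (by omega : t + 2 ≤ s)]
      push_cast; ring
    have h1 : Real.logb 2 (X:ℝ) < ((s - t - 2 : ℕ) : ℝ) := by
      rw [hk]; push_cast at hs ⊢; linarith
    have hXpos : (0:ℝ) < (X:ℝ) := by exact_mod_cast hX1
    have h2 := (Real.logb_lt_iff_lt_rpow one_lt_two hXpos).mp h1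
    rw [Real.rpow_natCast] at h2
    exact_mod_cast h2
  clear hs hlogb0 hceilc
  have htm : t ≤ n / 2 := by omega
  -- the linear map cutting out the subspace
  let par : (Fin (n / 2) → ZMod 2) →ₗ[ZMod 2] ZMod 2 := ∑ i : Fin (n / 2), LinearMap.proj i
  let coordmap : (Fin (n / 2) → ZMod 2) →ₗ[ZMod 2] (Fin t → ZMod 2) :=
    LinearMap.pi (fun j => LinearMap.proj (Fin.castLE htm j))
  let F : (Fin s → ZMod 2) →ₗ[ZMod 2] (ZMod 2 × (Fin t → ZMod 2)) :=
    (par.comp ι).prod (coordmap.comp ι)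
  set W := LinearMap.ker F with hW
  haveI : DecidablePred (· ∈ W) := fun σ =>
    decidable_of_iff (F σ = 0) (LinearMap.mem_ker).symm
  -- membership facts
  have hmem1 : ∀ σ ∈ W, (∑ i, ι σ i) = 0 := by
    intro σ hσ
    have h := (LinearMap.mem_ker.mp hσ)
    have h1 : par (ι σ) = 0 := congrArg Prod.fst h
    simpa [par, LinearMap.sum_apply] using h1
  have hmem2 : ∀ σ ∈ W, ∀ i : Fin (n / 2), (i : ℕ) < t → ι σ i = 0 := by
    intro σ hσ i hi
    have h := (LinearMap.mem_ker.mp hσ)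
    have h1 : coordmap (ι σ) = 0 := congrArg Prod.snd h
    have h2 : ι σ (Fin.castLE htm ⟨(i:ℕ), hi⟩) = 0 := by
      rw [show ι σ (Fin.castLE htm ⟨(i:ℕ), hi⟩) = coordmap (ι σ) ⟨(i:ℕ), hi⟩ from rfl, h1]
      rfl
    have h3 : Fin.castLE htm ⟨(i:ℕ), hi⟩ = i := by ext; rfl
    rwa [h3] at h2
  set WF := Finset.univ.filter (· ∈ W) with hWF
  set N := WF.card with hN
  -- cardinality of W
  have hND : D + 3 ≤ N := by
    have hcardW : Fintype.card W = 2 ^ (Module.finrank (ZMod 2) W) := by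
      have := Module.card_eq_pow_finrank (K := ZMod 2) (V := W)
      rwa [ZMod.card] at this
    have hrange := Submodule.finrank_le (LinearMap.range F)
    have hrk := LinearMap.finrank_range_add_finrank_ker F
    rw [← hW] at hrk
    rw [Module.finrank_fintype_fun_eq_card, Fintype.card_fin] at hrk
    have hrange2 : Module.finrank (ZMod 2) (ZMod 2 × (Fin t → ZMod 2)) = 1 + t := by
      rw [Module.finrank_prod, Module.finrank_self, Module.finrank_fintype_fun_eq_card,
        Fintype.card_fin]
    rw [hrange2] at hrange
    have hkr : s - (t+1) ≤ Module.finrank (ZMod 2) W := by omega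
    have hNW : N = Fintype.card W := (Fintype.card_subtype _).symm
    have hpow : 2 ^ (s - t - 1) ≤ 2 ^ (Module.finrank (ZMod 2) W) :=
      Nat.pow_le_pow_right (by norm_num) (by omega)
    have hDpow : D + 3 ≤ 2 ^ (s - t - 1) := by
      have h1 : s - t - 1 = (s - t - 2) + 1 := by omega
      have h2 : (D:ℤ) + 3 ≤ 2 * (2:ℤ) ^ (s - t - 2) := by omega
      have h3 : ((D:ℤ)) + 3 ≤ (2:ℤ) ^ (s - t - 1) := by
        rw [h1, pow_succ]; linarith
      have h4 : ((D + 3 : ℕ) : ℤ) ≤ ((2 ^ (s - t - 1) : ℕ) : ℤ) := by push_cast; linarith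
      exact_mod_cast h4
    omega
  -- the counting bound
  have hcount : ∀ i : Fin (n / 2), t ≤ (i:ℕ) →
      2 * (WF.filter fun σ => ι σ i ≠ 0).card ≤ N := by
    intro i _
    by_cases hex : ∃ σ₀ ∈ WF, ι σ₀ i ≠ 0
    · obtain ⟨σ₀, hσ₀WF, hσ₀⟩ := hex
      have hσ₀W : σ₀ ∈ W := (Finset.mem_filter.mp hσ₀WF).2
      have hle : (WF.filter fun σ => ι σ i ≠ 0).card ≤
          (WF.filter fun σ => ¬ ι σ i ≠ 0).card := by
        apply Finset.card_le_card_of_injOn (fun σ => σ + σ₀)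
        · intro σ hσ
          obtain ⟨hσWF, hσi⟩ := Finset.mem_filter.mp hσ
          have hσW : σ ∈ W := (Finset.mem_filter.mp hσWF).2
          refine Finset.mem_filter.mpr ⟨Finset.mem_filter.mpr
            ⟨Finset.mem_univ _, add_mem hσW hσ₀W⟩, ?_⟩
          rw [not_not, map_add]
          exact zmod2_add_aux _ _ hσi hσ₀
        · intro a _ b _ hab
          exact add_right_cancel hab
      have hsplit := Finset.card_filter_add_card_filter_not
        (s := WF) (p := fun σ => ι σ i ≠ 0)
      omega
    · have hempty : (WF.filter fun σ => ι σ i ≠ 0) = ∅ := by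
        apply Finset.filter_eq_empty_iff.mpr
        intro σ hσ
        push_neg at hex
        simpa using hex σ hσ
      rw [hempty]; simp
  -- total weight bound
  have hsum : 2 * ∑ σ ∈ WF, hammingNorm (ι σ) ≤ (n / 2 - t) * N := by
    have h1 : ∑ σ ∈ WF, hammingNorm (ι σ)
        = ∑ i : Fin (n / 2), (WF.filter fun σ => ι σ i ≠ 0).card := by
      have : ∀ σ, hammingNorm (ι σ) = ∑ i : Fin (n / 2), if ι σ i ≠ 0 then 1 else 0 := by
        intro σ; rw [hammingNorm, Finset.card_filter]
      simp_rw [this]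
      rw [Finset.sum_comm]
      exact Finset.sum_congr rfl fun i _ => (Finset.card_filter _ _).symm
    have hIci : Finset.univ.filter (fun i : Fin (n / 2) => t ≤ (i:ℕ))
        = Finset.Ici (⟨t, by omega⟩ : Fin (n / 2)) := by
      ext i; simp [Fin.le_def]
    calc 2 * ∑ σ ∈ WF, hammingNorm (ι σ)
        = ∑ i : Fin (n / 2), 2 * (WF.filter fun σ => ι σ i ≠ 0).card := by
          rw [h1, Finset.mul_sum]
      _ = ∑ i ∈ Finset.univ.filter (fun i : Fin (n / 2) => t ≤ (i:ℕ)),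
            2 * (WF.filter fun σ => ι σ i ≠ 0).card := by
          refine (Finset.sum_subset (Finset.filter_subset _ _) ?_).symm
          intro i _ hi
          simp only [Finset.mem_filter, Finset.mem_univ, true_and, not_le] at hi
          have : (WF.filter fun σ => ι σ i ≠ 0) = ∅ := by
            apply Finset.filter_eq_empty_iff.mpr
            intro σ hσ
            rw [not_not]
            exact hmem2 σ (Finset.mem_filter.mp hσ).2 i hi
          rw [this]; simp
      _ ≤ ∑ i ∈ Finset.univ.filter (fun i : Fin (n / 2) => t ≤ (i:ℕ)), N := by
          refine Finset.sum_le_sum ?_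
          intro i hi
          exact hcount i (Finset.mem_filter.mp hi).2
      _ = (n / 2 - t) * N := by
          rw [Finset.sum_const, hIci, Fin.card_Ici, smul_eq_mul]
  -- choose a minimal-weight nonzero element
  have h0WF : (0 : Fin s → ZMod 2) ∈ WF :=
    Finset.mem_filter.mpr ⟨Finset.mem_univ _, zero_mem W⟩
  have hScard : (WF.erase 0).card = N - 1 := Finset.card_erase_of_mem h0WF
  have hSne : (WF.erase 0).Nonempty := Finset.card_pos.mp (by omega)
  obtain ⟨σ₁, hσ₁S, hmin⟩ := Finset.exists_min_image (WF.erase 0)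
    (fun σ => hammingNorm (ι σ)) hSne
  set d := hammingNorm (ι σ₁) with hd
  have hσ₁ne : σ₁ ≠ 0 := (Finset.mem_erase.mp hσ₁S).1
  have hσ₁W : σ₁ ∈ W := (Finset.mem_filter.mp (Finset.mem_erase.mp hσ₁S).2).2
  -- lower bound on the sum
  have hlow : (N - 1) * d ≤ ∑ σ ∈ WF, hammingNorm (ι σ) := by
    calc (N - 1) * d = (WF.erase 0).card • d := by rw [hScard, smul_eq_mul]
      _ ≤ ∑ σ ∈ WF.erase 0, hammingNorm (ι σ) :=
          Finset.card_nsmul_le_sum _ _ _ (fun σ hσ => hmin σ hσ)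
      _ ≤ ∑ σ ∈ WF, hammingNorm (ι σ) :=
          Finset.sum_le_sum_of_subset (Finset.erase_subset _ _)
  -- arithmetic conclusion
  have hmtD : n / 2 - t ≤ D / 2 := by omega
  have h4d : 4 * d ≤ D := by
    by_contra hcon
    push_neg at hcon
    have h2d : D / 2 + 1 ≤ 2 * d := by omega
    obtain ⟨N', hN'⟩ : ∃ N', N = N' + 1 := ⟨N - 1, by omega⟩
    rw [hN'] at hsum hlow hND
    rw [Nat.add_sub_cancel] at hlow
    have hchain : N' * (D/2 + 1) ≤ (D/2) * (N' + 1) := by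
      calc N' * (D/2 + 1) ≤ N' * (2 * d) := Nat.mul_le_mul_left _ h2d
        _ = 2 * (N' * d) := by ring
        _ ≤ 2 * ∑ σ ∈ WF, hammingNorm (ι σ) := by
            exact Nat.mul_le_mul_left _ hlow
        _ ≤ (n / 2 - t) * (N' + 1) := hsum
        _ ≤ (D/2) * (N' + 1) := Nat.mul_le_mul_right _ hmtD
    have hp : N' * (D/2 + 1) = N' * (D/2) + N' := by ring
    have hq : (D/2) * (N' + 1) = N' * (D/2) + D/2 := by ring
    have hle : N' ≤ D/2 := by
      rw [hp, hq] at hchain; exact le_of_add_le_add_left hchain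
    omega
  -- evenness
  have heven : Even (hammingNorm (ι σ₁)) := by
    have hcast : ((hammingNorm (ι σ₁) : ℕ) : ZMod 2) = ∑ i, ι σ₁ i := by
      rw [hammingNorm, Finset.card_filter]
      push_cast
      exact Finset.sum_congr rfl fun i _ => zmod2_ite_aux (ι σ₁ i)
    rw [hmem1 σ₁ hσ₁W] at hcast
    exact even_iff_two_dvd.mpr ((ZMod.natCast_eq_zero_iff _ 2).mp hcast)
  exact ⟨σ₁, hσ₁ne, heven, h4d⟩
end

section
/- Let b', b'' : ℕ → ℕ be sequences with b'₀ = b''₀ = 1, and let b be their convolution, b_k = Σ_{i=0}^{k} b'_i · b''_{k-i}. Assume b₁ = 0, b₄ = 1, b₂ = b₆, b₄ = b₈, and b₁ = b₅. Then b'₄ + b''₄ = 1. -/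
/-!
Every term `b' i * b'' (k - i)` of the convolution is bounded by `b k`, and `b' k + b'' k ≤ b k`
for `k > 0`. Thus `b₁ = 0` kills `b'₁, b''₁`, and `b'₄ + b''₄ ≤ b₄ = 1`.
If `b'₄ = b''₄ = 0`, then `b₄ = b'₂ b''₂` forces `b'₂ = b''₂ = 1`; then `b₅ = 0` kills
`b'₃, b''₃`, so `b'₆ + b''₆ = b₆ = b₂ = 2`, while `b₈ ≥ b'₂ b''₆ + b'₆ b''₂ = 2`
contradicts `b₈ = b₄ = 1`.
-/

section Convolution

variable {f g : ℕ → ℕ} {i j k : ℕ}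

lemma mul_le_convolution (hi : i ≤ k) :
    f i * g (k - i) ≤ ∑ l ∈ Finset.range (k + 1), f l * g (k - l) :=
  Finset.single_le_sum (f := fun l => f l * g (k - l)) (fun _ _ => Nat.zero_le _)
    (Finset.mem_range.2 (Nat.lt_succ_of_le hi))

lemma add_mul_le_convolution (hij : i ≠ j) (hi : i ≤ k) (hj : j ≤ k) :
    f i * g (k - i) + f j * g (k - j) ≤ ∑ l ∈ Finset.range (k + 1), f l * g (k - l) := by
  rw [← Finset.sum_pair (f := fun l => f l * g (k - l)) hij]
  refine Finset.sum_le_sum_of_subset (fun l hl => ?_)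
  rcases Finset.mem_insert.1 hl with rfl | hl
  · exact Finset.mem_range.2 (Nat.lt_succ_of_le hi)
  · rw [Finset.mem_singleton.1 hl]
    exact Finset.mem_range.2 (Nat.lt_succ_of_le hj)

lemma add_le_convolution (hf : f 0 = 1) (hg : g 0 = 1) (hk : k ≠ 0) :
    f k + g k ≤ ∑ l ∈ Finset.range (k + 1), f l * g (k - l) := by
  simpa [hf, hg, add_comm] using
    add_mul_le_convolution (f := f) (g := g) hk.symm (Nat.zero_le k) le_rfl

end Convolution

/-- Künneth convolution argument: if `b` is the convolution of `b'` and `b''`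
with `b'₀ = b''₀ = 1`, `b₁ = 0`, `b₄ = 1`, `b₂ = b₆`, `b₄ = b₈`, `b₁ = b₅`,
then `b'₄ + b''₄ = 1`. -/
theorem stmt_9 (b' b'' b : ℕ → ℕ)
    (hb : ∀ k, b k = ∑ i ∈ Finset.range (k + 1), b' i * b'' (k - i))
    (h0' : b' 0 = 1) (h0'' : b'' 0 = 1)
    (h1 : b 1 = 0) (h4 : b 4 = 1) (h26 : b 2 = b 6) (h48 : b 4 = b 8)
    (h15 : b 1 = b 5) :
    b' 4 + b'' 4 = 1 := by
  have hle (k : ℕ) (hk : k ≠ 0) : b' k + b'' k ≤ b k :=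
    hb k ▸ add_le_convolution h0' h0'' hk
  have hmul (k i : ℕ) (hi : i ≤ k) : b' i * b'' (k - i) ≤ b k := hb k ▸ mul_le_convolution hi
  obtain ⟨ha1, hc1⟩ : b' 1 = 0 ∧ b'' 1 = 0 := by have := hle 1 one_ne_zero; omega
  refine le_antisymm (h4 ▸ hle 4 (by norm_num)) (Nat.pos_of_ne_zero fun hzero => ?_)
  obtain ⟨ha4, hc4⟩ : b' 4 = 0 ∧ b'' 4 = 0 := by omega
  have e4 := hb 4
  simp only [Finset.sum_range_succ, Finset.sum_range_zero, Nat.reduceSub,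
    h0', h0'', ha1, hc1, ha4, hc4] at e4
  obtain ⟨ha2, hc2⟩ : b' 2 = 1 ∧ b'' 2 = 1 := mul_eq_one.1 (by omega)
  have ha3 : b' 3 = 0 := by simpa [hc2, ← h15, h1] using hmul 5 3 (by norm_num)
  have hc3 : b'' 3 = 0 := by simpa [ha2, ← h15, h1] using hmul 5 2 (by norm_num)
  have e2 := hb 2
  have e6 := hb 6
  simp only [Finset.sum_range_succ, Finset.sum_range_zero, Nat.reduceSub,
    h0', h0'', ha1, hc1, ha2, hc2, ha3, hc3, ha4, hc4] at e2 e6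
  have h8 : b' 2 * b'' 6 + b' 6 * b'' 2 ≤ b 8 := by
    rw [hb 8]
    exact add_mul_le_convolution (k := 8) (i := 2) (j := 6)
      (by norm_num) (by norm_num) (by norm_num)
  rw [ha2, hc2] at h8
  omega
end

section
/- Let c ≥ 9 be an integer, let b', b'' : ℕ → ℕ be sequences with b'₀ = b''₀ = 1, and let b be their convolution b_k = Σ_{i=0}^{k} b'_i b''_{k-i}. Assume: b₄ = 1, b''₄ = 0, b_i = b_{i+4} for all 0 < i < c-4, and b'_j ≤ b'_{j+4} for all 0 ≤ j < c-4. Then b'_j = b'_{j+4} for all 0 ≤ j < c-4, and b''_j = 0 for all 4 ≤ j < c. -/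
/-!
Split the coefficient of index `i + 4` of the convolution into the terms with `b'_m`, `m < 4`,
and the terms with `b'_{m+4}`, `m ≤ i`. The latter dominate the coefficient of index `i` termwise
because `b'_m ≤ b'_{m+4}`, and the former contain `b'_0 b''_{i+4} = b''_{i+4}`. Periodicity of the
convolution forces both inequalities to be equalities, so `b''_{i+4} = 0` and, reading off the
term `m = i` with `b''_0 = 1`, `b'_i = b'_{i+4}`.
-/

open Finset

def cauchyCoeff (f g : ℕ → ℕ) (k : ℕ) : ℕ := ∑ m ∈ range (k + 1), f m * g (k - m)

section CauchyCoeff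

variable {f g : ℕ → ℕ}

theorem mul_le_cauchyCoeff {m k : ℕ} (hm : m ≤ k) : f m * g (k - m) ≤ cauchyCoeff f g k :=
  single_le_sum (f := fun m => f m * g (k - m)) (fun _ _ => Nat.zero_le _)
    (mem_range.mpr (Nat.lt_succ_of_le hm))

theorem cauchyCoeff_add (f g : ℕ → ℕ) (i n : ℕ) :
    cauchyCoeff f g (i + n) = ∑ m ∈ range n, f m * g (i + n - m)
      + ∑ m ∈ range (i + 1), f (n + m) * g (i - m) := by
  rw [cauchyCoeff, show i + n + 1 = n + (i + 1) by omega, sum_range_add]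
  congr 1
  refine sum_congr rfl fun m _ => ?_
  congr 2
  omega

theorem eq_zero_and_mul_eq_of_cauchyCoeff_add_eq {i n : ℕ} (hn : 0 < n) (hf0 : f 0 = 1)
    (hmono : ∀ m ≤ i, f m ≤ f (m + n))
    (hper : cauchyCoeff f g (i + n) = cauchyCoeff f g i) :
    g (i + n) = 0 ∧ ∀ m ≤ i, f m * g (i - m) = f (m + n) * g (i - m) := by
  have hterm : ∀ m ∈ range (i + 1), f m * g (i - m) ≤ f (n + m) * g (i - m) := fun m hm =>
    Nat.mul_le_mul_right _ (add_comm n m ▸ hmono m (Nat.lt_succ_iff.mp (mem_range.mp hm)))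
  have hhead : g (i + n) ≤ ∑ m ∈ range n, f m * g (i + n - m) := by
    simpa [hf0] using single_le_sum (f := fun m => f m * g (i + n - m))
      (fun _ _ => Nat.zero_le _) (mem_range.mpr hn)
  have htail : cauchyCoeff f g i ≤ ∑ m ∈ range (i + 1), f (n + m) * g (i - m) :=
    sum_le_sum hterm
  rw [cauchyCoeff_add] at hper
  have htail_eq : cauchyCoeff f g i = ∑ m ∈ range (i + 1), f (n + m) * g (i - m) := by omega
  refine ⟨by omega, fun m hm => ?_⟩
  rw [add_comm m n]
  exact (sum_eq_sum_iff_of_le hterm).mp htail_eq m (mem_range.mpr (Nat.lt_succ_of_le hm))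

theorem eq_add_of_cauchyCoeff_add_eq {i n : ℕ} (hn : 0 < n) (hf0 : f 0 = 1) (hg0 : g 0 = 1)
    (hmono : ∀ m ≤ i, f m ≤ f (m + n))
    (hper : cauchyCoeff f g (i + n) = cauchyCoeff f g i) :
    f i = f (i + n) := by
  simpa [hg0] using (eq_zero_and_mul_eq_of_cauchyCoeff_add_eq hn hf0 hmono hper).2 i le_rfl

end CauchyCoeff

theorem stmt_10_general (c : ℕ) (b' b'' b : ℕ → ℕ)
    (hb : ∀ k, b k = ∑ i ∈ Finset.range (k + 1), b' i * b'' (k - i))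
    (h0' : b' 0 = 1) (h0'' : b'' 0 = 1)
    (hb4 : b 4 = 1) (hb4'' : b'' 4 = 0)
    (hper : ∀ i, 0 < i → i < c - 4 → b i = b (i + 4))
    (hmono : ∀ j, j < c - 4 → b' j ≤ b' (j + 4)) :
    (∀ j, j < c - 4 → b' j = b' (j + 4)) ∧ (∀ j, 4 ≤ j → j < c → b'' j = 0) := by
  obtain rfl : b = cauchyCoeff b' b'' := funext hb
  have hmono_le {i : ℕ} (hi : i < c - 4) : ∀ m ≤ i, b' m ≤ b' (m + 4) :=
    fun m hm => hmono m (by omega)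
  constructor
  · intro j hj
    obtain rfl | hj0 := j.eq_zero_or_pos
    · have h4_le : b' 4 * b'' (4 - 4) ≤ cauchyCoeff b' b'' 4 := mul_le_cauchyCoeff le_rfl
      rw [Nat.sub_self, h0'', mul_one, hb4] at h4_le
      have h4_ge := hmono 0 hj
      rw [zero_add, h0'] at h4_ge ⊢
      omega
    · exact eq_add_of_cauchyCoeff_add_eq (by norm_num) h0' h0'' (hmono_le hj)
        (hper j hj0 hj).symm
  · intro j hj4 hjc
    obtain rfl | hj4 := hj4.eq_or_lt
    · exact hb4''
    obtain ⟨i, rfl⟩ : ∃ i, j = i + 4 := ⟨j - 4, by omega⟩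
    exact (eq_zero_and_mul_eq_of_cauchyCoeff_add_eq (by norm_num) h0' (hmono_le (by omega))
      (hper i (by omega) (by omega)).symm).1

/-- Periodicity transfers to a factor: let `c ≥ 9`, `b` the convolution of `b'`
and `b''` with `b'₀ = b''₀ = 1`, `b₄ = 1`, `b''₄ = 0`, `b_i = b_{i+4}` for
`0 < i < c-4`, and `b'_j ≤ b'_{j+4}` for `0 ≤ j < c-4`.  Then `b'_j = b'_{j+4}`
for `0 ≤ j < c-4` and `b''_j = 0` for `4 ≤ j < c`. -/
theorem stmt_10 (c : ℕ) (hc : 9 ≤ c) (b' b'' b : ℕ → ℕ)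
    (hb : ∀ k, b k = ∑ i ∈ Finset.range (k + 1), b' i * b'' (k - i))
    (h0' : b' 0 = 1) (h0'' : b'' 0 = 1)
    (hb4 : b 4 = 1) (hb4'' : b'' 4 = 0)
    (hper : ∀ i, 0 < i → i < c - 4 → b i = b (i + 4))
    (hmono : ∀ j, j < c - 4 → b' j ≤ b' (j + 4)) :
    (∀ j, j < c - 4 → b' j = b' (j + 4)) ∧ (∀ j, 4 ≤ j → j < c → b'' j = 0) :=
  stmt_10_general c b' b'' b hb h0' h0'' hb4 hb4'' hper hmono
end

section
/- Let b', b'' : ℕ → ℕ be sequences with b'₀ = b''₀ = 1 and b'₁ = b''₁ = 0, let b be their convolution b_k = Σ b'_i b''_{k-i}, and assume b₄ = 1, b₅ = 0, b₆ = b₂, b'₄ = 1, b''₄ = b''₅ = b''₆ = 0, and b'₂ + b'₃ > 0. Then b''₂ = b''₃ = 0. -/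
/-!
Every product `b' i * b'' j` is a summand of `b (i + j)`. From `b₄ = 1 = b'₄ b''₀` the summand
`b'₂ b''₂` vanishes, and from `b₅ = 0` so do `b'₄ b''₁ = b''₁`, `b'₃ b''₂` and `b'₂ b''₃`. If
`b'₂ > 0` these give `b''₂ = b''₃ = 0` directly. Otherwise `b'₃ > 0`, so `b''₂ = 0`, hence
`b₂ = b'₀ b''₂ + b'₁ b''₁ + b'₂ b''₀ = 0`, and then `b'₃ b''₃ ≤ b₆ = b₂ = 0` forces `b''₃ = 0`.
-/

open Finset

section Convolution

variable {f g c : ℕ → ℕ} (hc : ∀ k, c k = ∑ i ∈ range (k + 1), f i * g (k - i))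
include hc

theorem mul_le_of_convolution (i j : ℕ) : f i * g j ≤ c (i + j) := by
  have hi : i ∈ range (i + j + 1) := mem_range.2 (by omega)
  calc f i * g j = f i * g (i + j - i) := by rw [Nat.add_sub_cancel_left]
    _ ≤ c (i + j) := by
      rw [hc]
      exact single_le_sum (f := fun k => f k * g (i + j - k)) (fun _ _ => Nat.zero_le _) hi

theorem mul_add_mul_le_of_convolution {i j i' j' : ℕ} (h : i + j = i' + j') (hne : i ≠ i') :
    f i * g j + f i' * g j' ≤ c (i + j) := by
  have hsub : {i, i'} ⊆ range (i + j + 1) := by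
    intro x hx
    simp only [mem_insert, mem_singleton] at hx
    rw [mem_range]
    omega
  calc f i * g j + f i' * g j' = ∑ k ∈ {i, i'}, f k * g (i + j - k) := by
        rw [sum_pair hne, show i + j - i = j by omega, show i + j - i' = j' by omega]
    _ ≤ c (i + j) := hc (i + j) ▸ sum_le_sum_of_subset hsub

theorem mul_eq_zero_of_convolution {i j : ℕ} (h : c (i + j) = 0) : f i * g j = 0 :=
  Nat.le_zero.1 (h ▸ mul_le_of_convolution hc i j)

end Convolution

theorem stmt_11_general (b' b'' b : ℕ → ℕ)
    (hb : ∀ k, b k = ∑ i ∈ Finset.range (k + 1), b' i * b'' (k - i))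
    (h0'' : b'' 0 = 1)
    (hb4 : b 4 = 1) (hb5 : b 5 = 0) (hb62 : b 6 = b 2)
    (h4' : b' 4 = 1)
    (hpos : 0 < b' 2 + b' 3) :
    b'' 2 = 0 ∧ b'' 3 = 0 := by
  have h22 : b' 2 * b'' 2 = 0 := by
    have := mul_add_mul_le_of_convolution hb (i := 4) (j := 0) (i' := 2) (j' := 2) rfl (by decide)
    rw [hb4, h4', h0''] at this
    omega
  have h1'' : b'' 1 = 0 := by simpa [h4'] using mul_eq_zero_of_convolution hb (i := 4) (j := 1) hb5
  have h32 : b' 3 * b'' 2 = 0 := mul_eq_zero_of_convolution hb hb5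
  have h23 : b' 2 * b'' 3 = 0 := mul_eq_zero_of_convolution hb hb5
  rcases Nat.eq_zero_or_pos (b' 2) with h2 | h2
  · have h3 : 0 < b' 3 := by omega
    have h2'' : b'' 2 = 0 := (Nat.mul_eq_zero.1 h32).resolve_left h3.ne'
    have hb2 : b 2 = 0 := by simp [hb, sum_range_succ, h2, h1'', h2'']
    have h33 : b' 3 * b'' 3 = 0 := Nat.le_zero.1 (hb2 ▸ hb62 ▸ mul_le_of_convolution hb 3 3)
    exact ⟨h2'', (Nat.mul_eq_zero.1 h33).resolve_left h3.ne'⟩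
  · exact ⟨(Nat.mul_eq_zero.1 h22).resolve_left h2.ne',
      (Nat.mul_eq_zero.1 h23).resolve_left h2.ne'⟩

/-- Part (3) of the product lemma: under the stated Betti-number hypotheses on
the convolution, `b'₂ + b'₃ > 0` forces `b''₂ = b''₃ = 0`. -/
theorem stmt_11 (b' b'' b : ℕ → ℕ)
    (hb : ∀ k, b k = ∑ i ∈ Finset.range (k + 1), b' i * b'' (k - i))
    (h0' : b' 0 = 1) (h0'' : b'' 0 = 1) (h1' : b' 1 = 0) (h1'' : b'' 1 = 0)
    (hb4 : b 4 = 1) (hb5 : b 5 = 0) (hb62 : b 6 = b 2)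
    (h4' : b' 4 = 1) (h4'' : b'' 4 = 0) (h5'' : b'' 5 = 0) (h6'' : b'' 6 = 0)
    (hpos : 0 < b' 2 + b' 3) :
    b'' 2 = 0 ∧ b'' 3 = 0 :=
  stmt_11_general b' b'' b hb h0'' hb4 hb5 hb62 h4' hpos
end

section
/- Let A = ⊕_{i=0}^{n} A^i be a finite-dimensional graded ℚ-vector space with a graded-commutative associative multiplication, A⁰ = ℚ, A¹ = 0, satisfying Poincaré duality in formal dimension n (A^n ≅ ℚ with nondegenerate pairings A^i × A^{n-i} → A^n). Suppose n ≡ 0 (mod 4) and there exists x ∈ A⁴ such that multiplication by x, A^i → A^{i+4}, is surjective for i = 0, an isomorphism for 0 < i < n-4, and injective for i = n-4. Then A^i = 0 for all odd i. -/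
/-!
Poincaré duality makes `dim A^i = dim A^{n-i}`, and multiplication by `x` makes
`dim A^{i+4} = dim A^i` for `0 < i` and `i + 4 < n`. Hence every odd degree `i ≡ 1 (mod 4)`
below `n` has the dimension of `A¹ = 0`, and since `4 ∣ n` duality carries the degrees
`i ≡ 3 (mod 4)` onto these.
-/

open Module

theorem LinearMap.SeparatingLeft.finrank_le {K M N P : Type*} [Field K]
    [AddCommGroup M] [Module K M] [AddCommGroup N] [Module K N] [FiniteDimensional K N]
    [AddCommGroup P] [Module K P] (hP : finrank K P = 1)
    {B : M →ₗ[K] N →ₗ[K] P} (hB : B.SeparatingLeft) :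
    finrank K M ≤ finrank K N := by
  have : FiniteDimensional K P := Module.finite_of_finrank_eq_succ hP
  calc finrank K M ≤ finrank K (N →ₗ[K] P) :=
        LinearMap.finrank_le_finrank_of_injective
          (LinearMap.ker_eq_bot.mp (LinearMap.separatingLeft_iff_ker_eq_bot.mp hB))
    _ = finrank K N := by rw [Module.finrank_linearMap, hP, mul_one]

namespace SetLike

variable {ι R A : Type*} [AddMonoid ι] [CommSemiring R] [Semiring A] [Algebra R A]
  (𝒜 : ι → Submodule R A) [GradedMonoid 𝒜]

def gradedMul {i j k : ι} (h : i + j = k) : 𝒜 i →ₗ[R] 𝒜 j →ₗ[R] 𝒜 k :=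
  LinearMap.mk₂ R (fun a b => ⟨a * b, h ▸ mul_mem_graded a.2 b.2⟩)
    (fun _ _ _ => Subtype.ext (add_mul _ _ _))
    (fun _ _ _ => Subtype.ext (smul_mul_assoc _ _ _))
    (fun _ _ _ => Subtype.ext (mul_add _ _ _))
    (fun _ _ _ => Subtype.ext (mul_smul_comm _ _ _))

@[simp]
theorem coe_gradedMul_apply {i j k : ι} (h : i + j = k) (a : 𝒜 i) (b : 𝒜 j) :
    (gradedMul 𝒜 h a b : A) = a * b :=
  rfl

end SetLike

theorem finrank_graded_eq_of_mul_bijective {ι R A : Type*} [AddMonoid ι] [CommRing R] [Ring A]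
    [Algebra R A] (𝒜 : ι → Submodule R A) [SetLike.GradedMonoid 𝒜] {d i k : ι} (h : d + i = k)
    {x : A} (hx : x ∈ 𝒜 d) (hsurj : ∀ z ∈ 𝒜 k, ∃ y ∈ 𝒜 i, x * y = z)
    (hinj : ∀ y ∈ 𝒜 i, x * y = 0 → y = 0) :
    finrank R (𝒜 k) = finrank R (𝒜 i) := by
  have hbij : Function.Bijective (SetLike.gradedMul 𝒜 h ⟨x, hx⟩) := by
    refine ⟨LinearMap.ker_eq_bot.mp (LinearMap.ker_eq_bot'.mpr fun y hy => ?_), fun z => ?_⟩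
    · exact Subtype.ext (hinj y y.2 (congrArg Subtype.val hy))
    · obtain ⟨y, hy, hyz⟩ := hsurj z z.2
      exact ⟨⟨y, hy⟩, Subtype.ext hyz⟩
  exact (LinearEquiv.ofBijective _ hbij).finrank_eq.symm

theorem finrank_graded_le_of_mul_ne_zero {ι K A : Type*} [AddMonoid ι] [Field K] [Ring A]
    [Algebra K A] [FiniteDimensional K A] (𝒜 : ι → Submodule K A) [SetLike.GradedMonoid 𝒜]
    {i j k : ι} (h : i + j = k)
    (hk : finrank K (𝒜 k) = 1) (hpair : ∀ a ∈ 𝒜 i, a ≠ 0 → ∃ b ∈ 𝒜 j, a * b ≠ 0) :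
    finrank K (𝒜 i) ≤ finrank K (𝒜 j) := by
  refine LinearMap.SeparatingLeft.finrank_le hk (B := SetLike.gradedMul 𝒜 h) fun a ha => ?_
  by_contra ha0
  obtain ⟨b, hb, hab⟩ := hpair a a.2 (by simpa using ha0)
  exact hab (by simpa using congrArg Subtype.val (ha ⟨b, hb⟩))

theorem finrank_graded_eq_finrank_sub {K A : Type*} [Field K] [Ring A] [Algebra K A]
    [FiniteDimensional K A] (𝒜 : ℕ → Submodule K A) [SetLike.GradedMonoid 𝒜] {n : ℕ}
    (hAn : finrank K (𝒜 n) = 1)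
    (hpd : ∀ i ≤ n, ∀ a ∈ 𝒜 i, a ≠ 0 → ∃ b ∈ 𝒜 (n - i), a * b ≠ 0) {i : ℕ} (hi : i ≤ n) :
    finrank K (𝒜 i) = finrank K (𝒜 (n - i)) := by
  refine le_antisymm (finrank_graded_le_of_mul_ne_zero 𝒜 (by omega) hAn (hpd i hi)) ?_
  have hpd' := hpd (n - i) (Nat.sub_le n i)
  rw [Nat.sub_sub_self hi] at hpd'
  exact finrank_graded_le_of_mul_ne_zero 𝒜 (by omega) hAn hpd'

theorem Nat.eq_of_periodic_below {α : Type*} {f : ℕ → α} {d n : ℕ}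
    (hf : ∀ i, 0 < i → i + d < n → f (i + d) = f i) {j : ℕ} (hj : 0 < j) :
    ∀ k, j + d * k < n → f (j + d * k) = f j
  | 0, _ => rfl
  | k + 1, hk => by
    rw [show j + d * (k + 1) = j + d * k + d by ring] at hk ⊢
    rw [hf _ (by omega) hk, Nat.eq_of_periodic_below hf hj k (by omega)]

theorem stmt_13_general (n : ℕ) (A : Type*) [Ring A] [Algebra ℚ A]
    [FiniteDimensional ℚ A]
    (𝒜 : ℕ → Submodule ℚ A) [GradedAlgebra 𝒜]
    -- `A⁰ = ℚ` and `A¹ = 0`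
    (h1 : 𝒜 1 = ⊥)
    -- the grading is concentrated in degrees `0, …, n`
    (htop : ∀ i, n < i → 𝒜 i = ⊥)
    -- Poincaré duality: `Aⁿ ≅ ℚ` and the pairing `A^i × A^{n-i} → A^n` is nondegenerate
    (hAn : Module.finrank ℚ (𝒜 n) = 1)
    (hpd : ∀ i ≤ n, ∀ a ∈ 𝒜 i, a ≠ 0 → ∃ b ∈ 𝒜 (n - i), a * b ≠ 0)
    (hn : n % 4 = 0)
    -- 4-periodicity via multiplication by `x ∈ A⁴`
    (x : A) (hx : x ∈ 𝒜 4)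
    (hiso : ∀ i, 0 < i → i < n - 4 →
      (∀ z ∈ 𝒜 (i + 4), ∃ y ∈ 𝒜 i, x * y = z) ∧
      (∀ y ∈ 𝒜 i, x * y = 0 → y = 0)) :
    ∀ i, Odd i → 𝒜 i = ⊥ := by
  intro i hodd
  rcases Nat.lt_or_ge n i with hni | hin
  · exact htop i hni
  have hper : ∀ i, 0 < i → i + 4 < n → finrank ℚ (𝒜 (i + 4)) = finrank ℚ (𝒜 i) :=
    fun i hi _ => finrank_graded_eq_of_mul_bijective 𝒜 (add_comm 4 i) hx
      (hiso i hi (by omega)).1 (hiso i hi (by omega)).2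
  have hone : ∀ k, 1 + 4 * k < n → finrank ℚ (𝒜 (1 + 4 * k)) = 0 := fun k hk => by
    rw [Nat.eq_of_periodic_below (f := fun i => finrank ℚ (𝒜 i)) hper one_pos k hk, h1,
      finrank_bot]
  rw [← Submodule.finrank_eq_zero]
  rcases Nat.odd_mod_four_iff.mp (Nat.odd_iff.mp hodd) with h | h
  · rw [show i = 1 + 4 * (i / 4) by omega]
    exact hone _ (by omega)
  · rw [finrank_graded_eq_finrank_sub 𝒜 hAn hpd hin,
      show n - i = 1 + 4 * ((n - i) / 4) by omega]
    exact hone _ (by omega)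

/-- A finite-dimensional graded-commutative rational Poincaré duality algebra of
formal dimension `n ≡ 0 (mod 4)` with `A¹ = 0` whose cohomology is 4-periodic
has vanishing `A^i` for all odd `i`. -/
theorem stmt_13 (n : ℕ) (A : Type*) [Ring A] [Algebra ℚ A]
    [FiniteDimensional ℚ A]
    (𝒜 : ℕ → Submodule ℚ A) [GradedAlgebra 𝒜]
    -- graded commutativity
    (hcomm : ∀ i j : ℕ, ∀ a ∈ 𝒜 i, ∀ b ∈ 𝒜 j, a * b = ((-1 : ℚ) ^ (i * j)) • (b * a))
    -- `A⁰ = ℚ` and `A¹ = 0`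
    (h0 : 𝒜 0 = Submodule.span ℚ {1})
    (h1 : 𝒜 1 = ⊥)
    -- the grading is concentrated in degrees `0, …, n`
    (htop : ∀ i, n < i → 𝒜 i = ⊥)
    -- Poincaré duality: `Aⁿ ≅ ℚ` and the pairing `A^i × A^{n-i} → A^n` is nondegenerate
    (hAn : Module.finrank ℚ (𝒜 n) = 1)
    (hpd : ∀ i ≤ n, ∀ a ∈ 𝒜 i, a ≠ 0 → ∃ b ∈ 𝒜 (n - i), a * b ≠ 0)
    (hn : n % 4 = 0)
    -- 4-periodicity via multiplication by `x ∈ A⁴`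
    (x : A) (hx : x ∈ 𝒜 4)
    (hsurj0 : ∀ z ∈ 𝒜 4, ∃ y ∈ 𝒜 0, x * y = z)
    (hiso : ∀ i, 0 < i → i < n - 4 →
      (∀ z ∈ 𝒜 (i + 4), ∃ y ∈ 𝒜 i, x * y = z) ∧
      (∀ y ∈ 𝒜 i, x * y = 0 → y = 0))
    (hinj : ∀ y ∈ 𝒜 (n - 4), x * y = 0 → y = 0) :
    ∀ i, Odd i → 𝒜 i = ⊥ :=
  stmt_13_general n A 𝒜 h1 htop hAn hpd hn x hx hiso
end
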